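/- Let z ≥ 1 and let p, p_1, p_2 be partitions with p_1^⊤ ∪ p_2^⊤ = p^⊤ (multiset union of parts of the conjugates). Then d_com^{(z)}(p_1) ∪ d_com^{(z)}(p_2) ≤ d_com^{(z)}(p) in the dominance order. -/

import Mathlib

namespace PartStmt

/-- Sorted (nonincreasing) list of parts of a partition, represented as a multiset. -/
def parts (m : Multiset ℕ) : List ℕ := (m.sort (· ≤ ·)).reverse

/-- The `i`-th part (0-indexed), with `0` beyond the length. -/
def part (m : Multiset ℕ) (i : ℕ) : ℕ := (parts m).getD i 0

/-- Partial sum of the `k` largest parts. -/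
def psum (m : Multiset ℕ) (k : ℕ) : ℕ := ∑ i ∈ Finset.range k, part m i

/-- Dominance order: every partial sum of `l` is at most that of `m`. -/
def Dom (l m : Multiset ℕ) : Prop := ∀ k, psum l k ≤ psum m k

/-- Strict dominance. -/
def StrictDom (l m : Multiset ℕ) : Prop := Dom l m ∧ l ≠ m

/-- Componentwise sum of two partitions (sorted part sequences added, zero padding). -/
def psAdd (l m : Multiset ℕ) : Multiset ℕ :=
  ((Multiset.range (Multiset.card l + Multiset.card m)).map
    (fun i => part l i + part m i)).filter (0 < ·)

/-- The transpose (conjugate) partition: the `j`-th column length `#{x ∈ m : x ≥ j+1}`. -/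
def transpose (m : Multiset ℕ) : Multiset ℕ :=
  ((Multiset.range m.sum).map
    (fun j => Multiset.card (m.filter (fun x => j + 1 ≤ x)))).filter (0 < ·)

/-- The partition `s(m; z) = (z^a, b)` where `m = a z + b`, `0 ≤ b < z`. -/
def sPart (m z : ℕ) : Multiset ℕ :=
  Multiset.replicate (m / z) z + (if m % z = 0 then 0 else {m % z})

/-- `d_com^{(z)}(p) = Σ_i s(p_i; z)` (componentwise partition sum). -/
def dcom (z : ℕ) (p : Multiset ℕ) : Multiset ℕ :=
  (parts p).foldr (fun x acc => psAdd (sPart x z) acc) 0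

/-- A multiset is a partition when all its parts are positive. -/
def IsPartition (m : Multiset ℕ) : Prop := ∀ x ∈ m, 0 < x

/-! ### Auxiliary machinery -/

lemma parts_sorted (m : Multiset ℕ) : (parts m).Pairwise (· ≥ ·) := by
  rw [parts, List.pairwise_reverse]
  exact Multiset.pairwise_sort m (· ≤ ·)

lemma coe_parts (m : Multiset ℕ) : ((parts m : List ℕ) : Multiset ℕ) = m := by
  simp [parts]

/-- Count of elements `≥ v`. -/
def cnt (m : Multiset ℕ) (v : ℕ) : ℕ := Multiset.card (m.filter (v ≤ ·))

lemma key_list : ∀ (L : List ℕ), L.Pairwise (· ≥ ·) → ∀ v i, 1 ≤ v →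
    (v ≤ L.getD i 0 ↔ i < (L.filter (fun x => v ≤ x)).length)
  | [], _, v, i, hv => by simp; omega
  | x :: xs, hL, v, i, hv => by
    have hx : ∀ y ∈ xs, y ≤ x := fun y hy => (List.pairwise_cons.1 hL).1 y hy
    have hxs : xs.Pairwise (· ≥ ·) := (List.pairwise_cons.1 hL).2
    by_cases hvx : v ≤ x
    · cases i with
      | zero => simp [hvx]
      | succ i =>
        simp only [List.getD_cons_succ, List.filter_cons, hvx]
        rw [key_list xs hxs v i hv]
        simp
    · have hnil : xs.filter (fun x => v ≤ x) = [] := by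
        apply List.filter_eq_nil_iff.2
        intro y hy
        simp only [decide_eq_true_eq]
        exact fun hvy => hvx (hvy.trans (hx y hy))
      cases i with
      | zero => simp [hvx, hnil]
      | succ i =>
        simp only [List.getD_cons_succ, List.filter_cons, hvx]
        rw [key_list xs hxs v i hv, hnil]
        simp

lemma cnt_eq_length (m : Multiset ℕ) (v : ℕ) :
    cnt m v = ((parts m).filter (fun x => v ≤ x)).length := by
  rw [cnt]
  conv_lhs => rw [← coe_parts m]
  simp

lemma key (m : Multiset ℕ) (v i : ℕ) (hv : 1 ≤ v) : v ≤ part m i ↔ i < cnt m v := by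
  rw [part, cnt_eq_length]; exact key_list _ (parts_sorted m) v i hv

lemma part_anti (m : Multiset ℕ) {i j : ℕ} (hij : i ≤ j) : part m j ≤ part m i := by
  rcases Nat.eq_zero_or_pos (part m j) with h | h
  · omega
  · exact (key m _ i h).2 (lt_of_le_of_lt hij ((key m _ j h).1 le_rfl))

lemma part_le_sum (m : Multiset ℕ) (i : ℕ) : part m i ≤ m.sum := by
  rw [part]
  rcases lt_or_ge i (parts m).length with h | h
  · rw [List.getD_eq_getElem _ _ h]
    have hm : (parts m)[i] ∈ m := by
      have h2 : (parts m)[i] ∈ ((parts m : List ℕ) : Multiset ℕ) :=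
        Multiset.mem_coe.2 (List.getElem_mem h)
      rwa [coe_parts] at h2
    exact Multiset.single_le_sum (fun x _ => Nat.zero_le x) _ hm
  · rw [List.getD_eq_default _ _ h]; exact Nat.zero_le _

lemma part_eq_zero (m : Multiset ℕ) {i : ℕ} (h : Multiset.card m ≤ i) : part m i = 0 := by
  rw [part, List.getD_eq_default]
  rw [parts, List.length_reverse, Multiset.length_sort]
  exact h

lemma part_mem_or_zero (m : Multiset ℕ) (i : ℕ) : part m i ∈ m ∨ part m i = 0 := by
  rw [part]
  rcases lt_or_ge i (parts m).length with h | h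
  · left
    rw [List.getD_eq_getElem _ _ h]
    have h2 : (parts m)[i] ∈ ((parts m : List ℕ) : Multiset ℕ) :=
      Multiset.mem_coe.2 (List.getElem_mem h)
    rwa [coe_parts] at h2
  · right; rw [List.getD_eq_default _ _ h]

lemma sum_min (x N : ℕ) : ∑ j ∈ Finset.range N, (if j < x then 1 else 0) = min x N := by
  induction N with
  | zero => simp
  | succ n ih => rw [Finset.sum_range_succ, ih]; split <;> omega

lemma psum_succ (m : Multiset ℕ) (k : ℕ) : psum m (k + 1) = psum m k + part m k :=
  Finset.sum_range_succ _ _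

lemma cnt_add (a b : Multiset ℕ) (v : ℕ) : cnt (a + b) v = cnt a v + cnt b v := by
  simp [cnt, Multiset.filter_add]

lemma F2 (m : Multiset ℕ) (k M : ℕ) (hM : part m 0 ≤ M) :
    psum m k = ∑ v ∈ Finset.range M, min (cnt m (v + 1)) k := by
  have hpart : ∀ i, part m i = ∑ v ∈ Finset.range M, (if v < part m i then 1 else 0) := by
    intro i
    rw [sum_min]
    exact (Nat.min_eq_left ((part_anti m (Nat.zero_le i)).trans hM)).symm
  calc psum m k = ∑ i ∈ Finset.range k, ∑ v ∈ Finset.range M,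
        (if v < part m i then 1 else 0) := Finset.sum_congr rfl fun i _ => hpart i
    _ = ∑ v ∈ Finset.range M, ∑ i ∈ Finset.range k,
        (if v < part m i then 1 else 0) := Finset.sum_comm
    _ = _ := by
        refine Finset.sum_congr rfl fun v _ => ?_
        rw [← sum_min]
        refine Finset.sum_congr rfl fun i _ => ?_
        congr 1
        simp only [eq_iff_iff]
        rw [← Nat.succ_le_iff, key m (v+1) i (Nat.succ_le_succ (Nat.zero_le v))]

lemma psum_superadd (a b : Multiset ℕ) (k₁ k₂ : ℕ) :
    psum a k₁ + psum b k₂ ≤ psum (a + b) (k₁ + k₂) := by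
  set M := a.sum + b.sum with hM
  have ha : part a 0 ≤ M := (part_le_sum a 0).trans (Nat.le_add_right _ _)
  have hb : part b 0 ≤ M := (part_le_sum b 0).trans (Nat.le_add_left _ _)
  have hab : part (a + b) 0 ≤ M := by
    have := part_le_sum (a + b) 0
    rwa [Multiset.sum_add] at this
  rw [F2 a k₁ M ha, F2 b k₂ M hb, F2 (a + b) (k₁ + k₂) M hab, ← Finset.sum_add_distrib]
  exact Finset.sum_le_sum fun v _ => by rw [cnt_add]; omega

lemma psum_split (a b : Multiset ℕ) (k : ℕ) :
    ∃ k₁ k₂, k₁ + k₂ = k ∧ psum (a + b) k ≤ psum a k₁ + psum b k₂ := by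
  induction k with
  | zero => exact ⟨0, 0, rfl, le_refl _⟩
  | succ k ih =>
    obtain ⟨k₁, k₂, hk, hle⟩ := ih
    have hpart : part (a + b) k ≤ max (part a k₁) (part b k₂) := by
      rcases Nat.eq_zero_or_pos (part (a + b) k) with h0 | h0
      · omega
      · have hcnt := (key (a + b) _ k h0).1 le_rfl
        rw [cnt_add] at hcnt
        rcases le_or_gt (cnt a (part (a+b) k)) k₁ with h1 | h1
        · have : k₂ < cnt b (part (a+b) k) := by omega
          exact le_max_of_le_right ((key b _ k₂ h0).2 this)
        · exact le_max_of_le_left ((key a _ k₁ h0).2 h1)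
    rcases le_or_gt (part b k₂) (part a k₁) with hc | hc
    · exact ⟨k₁ + 1, k₂, by omega, by rw [psum_succ, psum_succ]; omega⟩
    · exact ⟨k₁, k₂ + 1, by omega, by rw [psum_succ, psum_succ b k₂]; omega⟩

lemma part_G (f : ℕ → ℕ) (hf : ∀ i j, i ≤ j → f j ≤ f i) (n : ℕ) (hn : f n = 0) (i : ℕ) :
    part (((Multiset.range n).map f).filter (0 < ·)) i = f i := by
  have hex : ∃ j, f j = 0 := ⟨n, hn⟩
  set t := Nat.find hex with ht
  have htn : t ≤ n := Nat.find_min' hex hn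
  have hpos : ∀ j, j < t → 0 < f j := fun j hj =>
    Nat.pos_of_ne_zero (Nat.find_min hex hj)
  have hzero : ∀ j, t ≤ j → f j = 0 := fun j hj =>
    Nat.le_zero.1 ((Nat.find_spec hex) ▸ hf t j hj)
  set M : Multiset ℕ := ((Multiset.range n).map f).filter (0 < ·) with hM
  have hlist : ((List.range n).map f).filter (fun x => 0 < x) = (List.range t).map f := by
    have hsplit : List.range n = List.range t ++ (List.range (n - t)).map (t + ·) := by
      rw [← List.range_add]; congr 1; omega
    rw [hsplit, List.map_append, List.filter_append]
    rw [List.filter_eq_self.2 (by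
      intro a ha
      obtain ⟨j, hj, rfl⟩ := List.mem_map.1 ha
      simpa using hpos j (List.mem_range.1 hj))]
    rw [List.filter_eq_nil_iff.2 (by
      intro a ha
      obtain ⟨j, hj, rfl⟩ := List.mem_map.1 ha
      obtain ⟨i', _, rfl⟩ := List.mem_map.1 hj
      simpa using hzero _ (Nat.le_add_right t i'))]
    simp
  have hcoe : ((((List.range t).map f) : List ℕ) : Multiset ℕ) = M := by
    rw [hM, ← hlist]
    rw [show (Multiset.range n) = ((List.range n : List ℕ) : Multiset ℕ) from rfl]
    simp [Multiset.map_coe, Multiset.filter_coe]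
  have hsorted : (((List.range t).map f) : List ℕ).Pairwise (· ≥ ·) := by
    rw [List.pairwise_map]
    exact (List.pairwise_lt_range (n := t)).imp (fun h => hf _ _ (Nat.le_of_lt h))
  have hparts : parts M = (List.range t).map f := by
    apply List.Perm.eq_of_pairwise' (parts_sorted M) hsorted
    rw [← Multiset.coe_eq_coe, coe_parts, hcoe]
  rw [part, hparts]
  rcases lt_or_ge i t with h | h
  · rw [List.getD_eq_getElem _ _ (by simpa using h)]
    simp
  · rw [List.getD_eq_default _ _ (by simpa using h)]
    exact (hzero i h).symm

lemma psum_psAdd (l m : Multiset ℕ) (k : ℕ) :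
    psum (psAdd l m) k = psum l k + psum m k := by
  have hf : ∀ i j, i ≤ j → part l j + part m j ≤ part l i + part m i :=
    fun i j hij => Nat.add_le_add (part_anti l hij) (part_anti m hij)
  have hn : part l (Multiset.card l + Multiset.card m)
      + part m (Multiset.card l + Multiset.card m) = 0 := by
    rw [part_eq_zero l (Nat.le_add_right _ _), part_eq_zero m (Nat.le_add_left _ _)]
  have := part_G (fun i => part l i + part m i) hf _ hn
  rw [psum, psAdd]
  rw [Finset.sum_congr rfl (fun i _ => this i)]
  rw [Finset.sum_add_distrib]
  rfl

lemma cnt_cons (a : ℕ) (q : Multiset ℕ) (v : ℕ) :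
    cnt (a ::ₘ q) v = (if v ≤ a then 1 else 0) + cnt q v := by
  rw [cnt, cnt, Multiset.filter_cons]
  split <;> simp [Nat.add_comm]

lemma sum_cnt (q : Multiset ℕ) (N : ℕ) :
    ∑ j ∈ Finset.range N, cnt q (j + 1) = (q.map (fun x => min x N)).sum := by
  induction q using Multiset.induction with
  | empty => simp [cnt]
  | cons a q ih =>
    simp only [Multiset.map_cons, Multiset.sum_cons, ← ih]
    rw [Finset.sum_congr rfl (fun j _ => cnt_cons a q (j+1)), Finset.sum_add_distrib]
    congr 1
    rw [← sum_min a N]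
    exact Finset.sum_congr rfl fun j _ => by simp only [Nat.lt_iff_add_one_le]

lemma psum_transpose (q : Multiset ℕ) (N : ℕ) :
    psum (transpose q) N = (q.map (fun x => min x N)).sum := by
  have hf : ∀ i j, i ≤ j → cnt q (j+1) ≤ cnt q (i+1) := by
    intro i j hij
    exact Multiset.card_le_card
      (Multiset.monotone_filter_right q (fun x hx => le_trans (by omega) hx))
  have hn : cnt q (q.sum + 1) = 0 := by
    rw [cnt, Multiset.card_eq_zero, Multiset.filter_eq_nil]
    intro x hx
    have := Multiset.single_le_sum (fun y _ => Nat.zero_le y) x hx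
    omega
  have hG := part_G (fun j => cnt q (j+1)) hf q.sum hn
  have htr : transpose q
      = ((Multiset.range q.sum).map (fun j => cnt q (j+1))).filter (0 < ·) := by
    rw [transpose]; rfl
  rw [psum, htr, Finset.sum_congr rfl (fun j _ => hG j), sum_cnt]

lemma mem_sPart_le (m z : ℕ) (hz : 1 ≤ z) {x : ℕ} (hx : x ∈ sPart m z) : x ≤ z := by
  rw [sPart] at hx
  rcases Multiset.mem_add.1 hx with h | h
  · rw [Multiset.eq_of_mem_replicate h]
  · split at h
    · simp at h
    · rw [Multiset.mem_singleton.1 h]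
      exact le_of_lt (Nat.mod_lt m hz)

lemma cnt_sPart (m z : ℕ) (hz : 1 ≤ z) (v : ℕ) (hv : v < z) :
    cnt (sPart m z) (v + 1) = m / z + (if v < m % z then 1 else 0) := by
  rw [sPart, cnt, Multiset.filter_add, Multiset.card_add]
  congr 1
  · rw [Multiset.filter_eq_self.2 (fun x hx => by
      rw [Multiset.eq_of_mem_replicate hx]; omega)]
    exact Multiset.card_replicate _ _
  · split
    · rename_i hr
      rw [hr]
      simp
    · rw [Multiset.filter_singleton]
      split <;> split <;> simp_all <;> omega

lemma psum_sPart (m z : ℕ) (hz : 1 ≤ z) (k : ℕ) : psum (sPart m z) k = min m (k * z) := by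
  have h0 : part (sPart m z) 0 ≤ z := by
    rcases part_mem_or_zero (sPart m z) 0 with h | h
    · exact mem_sPart_le m z hz h
    · omega
  rw [F2 (sPart m z) k z h0]
  rw [Finset.sum_congr rfl (fun v hv => by
    rw [cnt_sPart m z hz v (Finset.mem_range.1 hv)])]
  have hqr : z * (m / z) + m % z = m := Nat.div_add_mod m z
  have hr : m % z < z := Nat.mod_lt m hz
  rcases le_or_gt k (m / z) with hk | hk
  · have h1 : k * z ≤ (m / z) * z := Nat.mul_le_mul_right z hk
    have h2 : (m / z) * z ≤ m := by rw [Nat.mul_comm]; omega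
    rw [Finset.sum_congr rfl (fun v _ => by
      have : k ≤ m / z + (if v < m % z then 1 else 0) := by split <;> omega
      exact Nat.min_eq_right this)]
    rw [Finset.sum_const, Finset.card_range, smul_eq_mul, Nat.mul_comm]
    omega
  · rw [Finset.sum_congr rfl (fun v _ => by
      have : m / z + (if v < m % z then 1 else 0) ≤ k := by split <;> omega
      exact Nat.min_eq_left this)]
    rw [Finset.sum_add_distrib, Finset.sum_const, Finset.card_range, smul_eq_mul,
      sum_min]
    have h3 : z * (m / z + 1) ≤ z * k := Nat.mul_le_mul_left z hk
    have h4 : z * (m / z + 1) = z * (m / z) + z := by ring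
    have h5 : z * k = k * z := Nat.mul_comm z k
    omega

lemma psum_zero_mult (k : ℕ) : psum 0 k = 0 := by
  have : ∀ i, part (0 : Multiset ℕ) i = 0 := fun i => part_eq_zero 0 (by simp)
  rw [psum, Finset.sum_congr rfl (fun i _ => this i), Finset.sum_const]
  simp

lemma psum_foldr (z : ℕ) (hz : 1 ≤ z) (L : List ℕ) (k : ℕ) :
    psum (L.foldr (fun x acc => psAdd (sPart x z) acc) 0) k
      = (L.map (fun x => min x (k * z))).sum := by
  induction L with
  | nil => simpa using psum_zero_mult k
  | cons x L ih =>
    rw [List.foldr_cons, psum_psAdd, psum_sPart x z hz k, ih, List.map_cons, List.sum_cons]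

lemma psum_dcom (z : ℕ) (hz : 1 ≤ z) (p : Multiset ℕ) (k : ℕ) :
    psum (dcom z p) k = (p.map (fun x => min x (k * z))).sum := by
  rw [dcom, psum_foldr z hz]
  conv_rhs => rw [← coe_parts p]
  simp

/-- if `p₁^⊤ ∪ p₂^⊤ = p^⊤` then
`d_com^{(z)}(p₁) ∪ d_com^{(z)}(p₂) ≤ d_com^{(z)}(p)` in dominance order. -/
theorem stmt6 (z : ℕ) (hz : 1 ≤ z) (p p₁ p₂ : Multiset ℕ)
    (hp : IsPartition p) (h1 : IsPartition p₁) (h2 : IsPartition p₂)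
    (h : transpose p₁ + transpose p₂ = transpose p) :
    Dom (dcom z p₁ + dcom z p₂) (dcom z p) := by
  intro k
  obtain ⟨k₁, k₂, hk, hle⟩ := psum_split (dcom z p₁) (dcom z p₂) k
  calc psum (dcom z p₁ + dcom z p₂) k
      ≤ psum (dcom z p₁) k₁ + psum (dcom z p₂) k₂ := hle
    _ = psum (transpose p₁) (k₁ * z) + psum (transpose p₂) (k₂ * z) := by
        rw [psum_dcom z hz p₁ k₁, psum_dcom z hz p₂ k₂,
          psum_transpose p₁ (k₁ * z), psum_transpose p₂ (k₂ * z)]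
    _ ≤ psum (transpose p₁ + transpose p₂) (k₁ * z + k₂ * z) := psum_superadd _ _ _ _
    _ = psum (dcom z p) k := by
        rw [h, show k₁ * z + k₂ * z = k * z by rw [← hk]; ring,
          psum_transpose p (k * z), psum_dcom z hz p k]

end PartStmt
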